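/- arXiv:2106.10904 — 2 statements merged into one kernel-verified Lean document; each statement's English description precedes it below -/
import Mathlib

section
/- With the same setting, the total risk R(f) = Σ_{i∈C} π_i P_i(f(x) ≠ i) can be rewritten so that no probability under a negative class appears except through the unlabeled mixture and a cross term: R(f) = Σ_{i∈C_P} π_i [P_i(f(x)≠i) − Σ_{m∈C_N} P_i(f(x)≠m)] + Σ_{m∈C_N} P_U(f(x)≠m) − Σ_{j,m∈C_N, j≠m} π_j P_j(f(x)≠m). -/
open Finset

/-- FedPU Eq. (8): the supervised risk `R(f) = ∑_i π_i P_i(f(x)≠i)` rewritten so that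
negative-class probabilities appear only through the unlabeled mixture
`P_U(A) = ∑_i π_i P_i(A)` and the negative-negative cross term.
Here `p i m` stands for `P_i(f(x) ≠ m)`. -/
theorem stmt1 {C : Type*} [Fintype C] [DecidableEq C]
    (P N : Finset C) (hdisj : Disjoint P N) (hunion : P ∪ N = Finset.univ)
    (π : C → ℝ) (hπ : ∀ i, 0 ≤ π i) (hsum : ∑ i, π i = 1)
    (p : C → C → ℝ) (hp : ∀ i m, p i m ∈ Set.Icc (0:ℝ) 1) :
    ∑ i, π i * p i i =
      (∑ i ∈ P, π i * (p i i - ∑ m ∈ N, p i m))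
      + (∑ m ∈ N, (∑ i, π i * p i m))
      - (∑ j ∈ N, ∑ m ∈ N.erase j, π j * p j m) := by
  have hsplit : ∀ f : C → ℝ, (∑ i, f i) = ∑ i ∈ P, f i + ∑ i ∈ N, f i := by
    intro f; rw [← Finset.sum_union hdisj, hunion]
  have hE : ∀ j ∈ N, (∑ m ∈ N.erase j, π j * p j m)
      = (∑ m ∈ N, π j * p j m) - π j * p j j := fun j hj =>
    (Finset.sum_erase_eq_sub hj)
  rw [hsplit (fun i => π i * p i i), Finset.sum_congr rfl hE,
    Finset.sum_congr rfl (fun m _ => hsplit (fun i => π i * p i m))]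
  simp only [mul_sub, Finset.mul_sum, Finset.sum_sub_distrib, Finset.sum_add_distrib]
  rw [Finset.sum_comm (s := P) (t := N) (f := fun i m => π i * p i m)]
  rw [Finset.sum_comm (s := N) (t := N) (f := fun m i => π i * p i m)]
  ring
end

section
/- Unbiasedness of the PU risk rewrite: under the mixture assumption P_U = Σ_{i∈C_P} π_i P_i + Σ_{j∈C_N} π_j P_j with Σ π = 1, the PU objective L(f) := Σ_{i∈C_P} π_i [P_i(f≠i) − Σ_{m∈C_N} P_i(f≠m)] + Σ_{m∈C_N} P_U(f≠m) − Σ_{j,m∈C_N, j≠m} π_j P_j(f≠m) equals the supervised risk R(f) = Σ_{i∈C} π_i P_i(f≠i) exactly (not just in expectation up to constants). -/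
open Finset

/-- Unbiasedness of the FedPU risk rewrite: the PU objective `L(f)` equals the supervised
risk `R(f) = ∑_i π_i P_i(f≠i)` exactly, for any values `p i m = P_i(f≠m) ∈ [0,1]`,
where `P_U(A) = ∑_i π_i P_i(A)` is the full mixture. -/
theorem stmt8 {C : Type*} [Fintype C] [DecidableEq C]
    (P N : Finset C) (hdisj : Disjoint P N) (hunion : P ∪ N = Finset.univ)
    (π : C → ℝ) (hπ : ∀ i, 0 ≤ π i) (hsum : ∑ i, π i = 1)
    (p : C → C → ℝ) (hp : ∀ i m, p i m ∈ Set.Icc (0:ℝ) 1) :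
    (∑ i ∈ P, π i * (p i i - ∑ m ∈ N, p i m))
      + (∑ m ∈ N, (∑ i, π i * p i m))
      - (∑ j ∈ N, ∑ m ∈ N.erase j, π j * p j m)
    = ∑ i, π i * p i i := by
  have hU : ∀ m, ∑ i, π i * p i m = ∑ i ∈ P, π i * p i m + ∑ i ∈ N, π i * p i m := by
    intro m; rw [← hunion, sum_union hdisj]
  simp only [hU]
  have h1 : ∑ i ∈ P, π i * (p i i - ∑ m ∈ N, p i m) + ∑ m ∈ N, ∑ i ∈ P, π i * p i m
      = ∑ i ∈ P, π i * p i i := by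
    rw [sum_comm, ← sum_add_distrib]
    refine sum_congr rfl fun i _ => ?_
    rw [mul_sub, Finset.mul_sum]; ring
  have h2 : ∑ m ∈ N, ∑ j ∈ N, π j * p j m - ∑ j ∈ N, ∑ m ∈ N.erase j, π j * p j m
      = ∑ j ∈ N, π j * p j j := by
    rw [sum_comm, ← sum_sub_distrib]
    refine sum_congr rfl fun j hj => ?_
    rw [← Finset.sum_erase_add _ _ hj]; ring
  have hR : ∑ i, π i * p i i = ∑ i ∈ P, π i * p i i + ∑ i ∈ N, π i * p i i := by
    rw [← hunion, sum_union hdisj]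
  rw [sum_add_distrib, hR]
  linarith [h1, h2]
end
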